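/- arXiv:1402.6564 — 3 statements merged into one kernel-verified Lean document; each statement's English description precedes it below -/
import Mathlib

section
/- Let Λ = (λ_{i,j}) be an n×n real matrix, and suppose T : Z^n → Z^n is a bounded linear projection (T² = T) on the n-fold ℓ∞-direct sum of a Banach space Z, of the form T = Λ·I + K, where Λ·I denotes the operator whose (i,j)-entry is λ_{i,j} times the identity on Z, and K = (K_{i,j}) is a matrix of operators such that for every ε > 0 there exists a norm-one vector x ∈ Z such that the matrix operators K and K' = (ΛI)K + K(ΛI) + K² both have norm < ε on the span of the vectors placing x in a single coordinate. Then Λ² = Λ, i.e., Λ is a projection on ℝⁿ. -/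
open Filter Topology

/-- If `T : Zⁿ → Zⁿ` (sup-norm sum) is a bounded projection of the form
`T = Λ·I + K` where `K` satisfies the stated horizontal-compactness smallness condition
(on single-coordinate vectors, for `K` and `K' = (ΛI)K + K(ΛI) + K² = TK + KT − K²`),
then `Λ` is a projection on `ℝⁿ`, i.e. `Λ` is a projection on `ℝⁿ`, i.e. `Λ² = Λ`. -/
theorem stmt_1 (Z : Type*) [NormedAddCommGroup Z] [NormedSpace ℝ Z] [CompleteSpace Z]
    (n : ℕ) (Λ : Matrix (Fin n) (Fin n) ℝ)
    (T K : (Fin n → Z) →L[ℝ] (Fin n → Z))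
    (hproj : T ∘L T = T)
    (hdecomp : ∀ (z : Fin n → Z) (i : Fin n), T z i = (∑ j, Λ i j • z j) + K z i)
    (hK : ∀ ε > (0 : ℝ), ∃ x : Z, ‖x‖ = 1 ∧ ∀ i : Fin n,
      ‖K (Pi.single i x)‖ < ε ∧ ‖(T ∘L K + K ∘L T - K ∘L K) (Pi.single i x)‖ < ε) :
    Λ * Λ = Λ := by
  ext i j
  have key : ∀ ε > (0:ℝ), |(Λ * Λ) i j - Λ i j| < 2 * ε := by
    intro ε hε
    obtain ⟨x, hx, hxb⟩ := hK ε hε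
    obtain ⟨h1, h2⟩ := hxb j
    set v : Fin n → Z := Pi.single j x with hv
    have hTv : ∀ k, T v k = Λ k j • x + K v k := by
      intro k
      rw [hdecomp]
      congr 1
      simp [hv, Pi.single_apply, Finset.sum_ite_eq']
    -- main equation
    have hmain : Λ i j • x + K v i
        = (∑ k, Λ i k * Λ k j) • x + ((T ∘L K + K ∘L T - K ∘L K) v) i := by
      have e1 : T v i = Λ i j • x + K v i := hTv i
      have e2 : T (T v) i = T v i := by rw [← ContinuousLinearMap.comp_apply, hproj]
      have e3 : T (T v) i = (∑ k, Λ i k * Λ k j) • x + (∑ k, Λ i k • K v k) + K (T v) i := by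
        rw [hdecomp]
        congr 1
        rw [Finset.sum_smul]
        rw [← Finset.sum_add_distrib]
        congr 1
        funext k
        rw [hTv k, smul_add, mul_smul]
      have e4 : T (K v) i = (∑ k, Λ i k • K v k) + K (K v) i := hdecomp _ i
      have e5 : ((T ∘L K + K ∘L T - K ∘L K) v) i
          = T (K v) i + K (T v) i - K (K v) i := by
        simp [ContinuousLinearMap.sub_apply, ContinuousLinearMap.add_apply,
          Pi.sub_apply, Pi.add_apply]
      rw [e5, e4, ← e1, ← e2, e3]
      abel
    have hsub : (Λ i j - (Λ * Λ) i j) • x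
        = ((T ∘L K + K ∘L T - K ∘L K) v) i - K v i := by
      rw [Matrix.mul_apply, sub_smul, sub_eq_sub_iff_add_eq_add]
      exact hmain.trans (add_comm _ _)
    have hn : |(Λ * Λ) i j - Λ i j| = ‖(Λ i j - (Λ * Λ) i j) • x‖ := by
      rw [norm_smul, hx, mul_one, Real.norm_eq_abs, abs_sub_comm]
    rw [hn, hsub]
    have b1 : ‖((T ∘L K + K ∘L T - K ∘L K) v) i‖ ≤ ‖(T ∘L K + K ∘L T - K ∘L K) v‖ :=
      norm_le_pi_norm _ i
    have b2 : ‖K v i‖ ≤ ‖K v‖ := norm_le_pi_norm _ i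
    calc ‖((T ∘L K + K ∘L T - K ∘L K) v) i - K v i‖
        ≤ ‖((T ∘L K + K ∘L T - K ∘L K) v) i‖ + ‖K v i‖ := norm_sub_le _ _
      _ < 2 * ε := by linarith
  have h0 : |(Λ * Λ) i j - Λ i j| ≤ 0 := by
    by_contra h
    push_neg at h
    have := key (|(Λ * Λ) i j - Λ i j| / 2) (by linarith)
    linarith
  have := abs_nonneg ((Λ * Λ) i j - Λ i j)
  have : (Λ * Λ) i j - Λ i j = 0 := by
    have := abs_eq_zero.mp (le_antisymm h0 (abs_nonneg _))
    exact this
  linarith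
end

section
/- Let Z be a Banach space with a Schauder decomposition given by uniformly bounded projections P_{[1,n]} (with P_{[1,n]}P_{[1,m]} = P_{[1,min(n,m)]} and P_{[1,n]}z → z for all z). Suppose P : Z → Z is a bounded projection of the form P = λI + K where λ ≠ 0 and K is horizontally compact, meaning ‖K z_k‖ → 0 for every bounded sequence (z_k) that is block with respect to the decomposition. Then there exists k₀ such that the restriction of P_{[1,k₀]} to V = ker P (equivalently, to the range of I − P) is an isomorphic embedding, i.e., bounded below. -/
open Filter Topology

/-- A sequence is block with respect to the Schauder decomposition given by the
projections `P n = P_{[1,n]}`. -/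
def IsBlock {Z : Type*} [NormedAddCommGroup Z] [NormedSpace ℝ Z]
    (P : ℕ → Z →L[ℝ] Z) (z : ℕ → Z) : Prop :=
  ∃ m n : ℕ → ℕ, (∀ k, m k < n k) ∧ (∀ k, n k < m (k + 1)) ∧
    ∀ k, P (n k) (z k) = z k ∧ P (m k) (z k) = 0

/-- If `Q = λI + K` is a bounded projection on `Z` with `λ ≠ 0` and `K`
horizontally compact (with respect to a Schauder decomposition with projections `P n`),
then `P k₀` restricted to `ker Q` is bounded below for some `k₀`. -/
theorem stmt_2 (Z : Type*) [NormedAddCommGroup Z] [NormedSpace ℝ Z] [CompleteSpace Z]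
    (P : ℕ → Z →L[ℝ] Z)
    (hbdd : ∃ C, ∀ n, ‖P n‖ ≤ C)
    (hcompat : ∀ n m, (P n) ∘L (P m) = P (min n m))
    (hlim : ∀ z : Z, Tendsto (fun n => P n z) atTop (𝓝 z))
    (Q K : Z →L[ℝ] Z) (hQ : Q ∘L Q = Q)
    (lam : ℝ) (hlam : lam ≠ 0)
    (hdecomp : ∀ z, Q z = lam • z + K z)
    (hK : ∀ z : ℕ → Z, (∃ C, ∀ k, ‖z k‖ ≤ C) → IsBlock P z →
      Tendsto (fun k => ‖K (z k)‖) atTop (𝓝 0)) :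
    ∃ k₀ : ℕ, ∃ c > (0 : ℝ), ∀ v : Z, Q v = 0 → c * ‖v‖ ≤ ‖P k₀ v‖ := by
  by_contra hcon
  push_neg at hcon
  have happ : ∀ a b (x : Z), P a (P b x) = P (min a b) x := by
    intro a b x
    have := DFunLike.congr_fun (hcompat a b) x
    simpa using this
  -- normalized almost-kernel vectors
  have key : ∀ (m : ℕ) (ε : ℝ), 0 < ε → ∃ v : Z, Q v = 0 ∧ ‖v‖ = 1 ∧ ‖P m v‖ < ε := by
    intro m ε hε
    obtain ⟨v, hv0, hltv⟩ := hcon m ε hε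
    have hvne : v ≠ 0 := by
      rintro rfl
      simp at hltv
    have hnv : (0:ℝ) < ‖v‖ := norm_pos_iff.mpr hvne
    refine ⟨‖v‖⁻¹ • v, ?_, ?_, ?_⟩
    · rw [map_smul, hv0, smul_zero]
    · rw [norm_smul, norm_inv, norm_norm, inv_mul_cancel₀ hnv.ne']
    · rw [map_smul, norm_smul, norm_inv, norm_norm]
      calc ‖v‖⁻¹ * ‖P m v‖ < ‖v‖⁻¹ * (ε * ‖v‖) :=
            mul_lt_mul_of_pos_left hltv (inv_pos.mpr hnv)
        _ = ε := by field_simp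
  have step : ∀ (m k : ℕ), ∃ (nv : ℕ × Z), m < nv.1 ∧ Q nv.2 = 0 ∧ ‖nv.2‖ = 1 ∧
      ‖P m nv.2‖ < 1/((k:ℝ)+1) ∧ ‖P nv.1 nv.2 - nv.2‖ < 1/((k:ℝ)+1) := by
    intro m k
    have hεpos : (0:ℝ) < 1/((k:ℝ)+1) := by positivity
    obtain ⟨v, hv0, hv1, hvm⟩ := key m _ hεpos
    obtain ⟨Nn, hNn⟩ := (Metric.tendsto_atTop.mp (hlim v)) _ hεpos
    refine ⟨(max Nn (m+1), v), ?_, hv0, hv1, hvm, ?_⟩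
    · exact lt_of_lt_of_le (Nat.lt_succ_self m) (le_max_right _ _)
    · rw [← dist_eq_norm]; exact hNn _ (le_max_left _ _)
  choose F hltF hQ0 hnorm1 hPm hPn using step
  set m : ℕ → ℕ := fun k => Nat.rec 0 (fun k mk => (F mk k).1 + 1) k with hm
  set n : ℕ → ℕ := fun k => (F (m k) k).1 with hn
  set v : ℕ → Z := fun k => (F (m k) k).2 with hv
  set z : ℕ → Z := fun k => P (n k) (v k) - P (m k) (v k) with hz
  have hmn : ∀ k, m k < n k := fun k => hltF (m k) k
  have hmsucc : ∀ k, m (k+1) = n k + 1 := fun _ => rfl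
  have hblock : IsBlock P z := by
    refine ⟨m, n, hmn, fun k => by rw [hmsucc k]; exact Nat.lt_succ_self _, fun k => ?_⟩
    constructor
    · simp only [hz, map_sub, happ]
      rw [min_self, min_eq_right (hmn k).le]
    · simp only [hz, map_sub, happ]
      rw [min_eq_left (hmn k).le, min_self, sub_self]
  have hvz : ∀ k, ‖v k - z k‖ ≤ 2/((k:ℝ)+1) := by
    intro k
    have : v k - z k = (v k - P (n k) (v k)) + P (m k) (v k) := by
      simp only [hz]; abel
    rw [this]
    calc ‖(v k - P (n k) (v k)) + P (m k) (v k)‖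
        ≤ ‖v k - P (n k) (v k)‖ + ‖P (m k) (v k)‖ := norm_add_le _ _
      _ ≤ 1/((k:ℝ)+1) + 1/((k:ℝ)+1) := by
          refine add_le_add ?_ (hPm (m k) k).le
          rw [norm_sub_rev]; exact (hPn (m k) k).le
      _ = 2/((k:ℝ)+1) := by ring
  have hzbdd : ∀ k, ‖z k‖ ≤ 3 := by
    intro k
    have h1 : (1:ℝ)/((k:ℝ)+1) ≤ 1 := by
      rw [div_le_one (by positivity)]
      simp [Nat.cast_nonneg]
    calc ‖z k‖ = ‖v k - (v k - z k)‖ := by congr 1; abel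
      _ ≤ ‖v k‖ + ‖v k - z k‖ := norm_sub_le _ _
      _ ≤ 1 + 2/((k:ℝ)+1) := by
          rw [hnorm1 (m k) k]
          exact add_le_add_right (hvz k) 1
      _ ≤ 3 := by
          have : (2:ℝ)/((k:ℝ)+1) ≤ 2 := by
            rw [div_le_iff₀ (by positivity : (0:ℝ) < (k:ℝ)+1)]
            nlinarith [Nat.cast_nonneg (α := ℝ) k]
          linarith
  have hKz : Tendsto (fun k => ‖K (z k)‖) atTop (𝓝 0) := hK z ⟨3, hzbdd⟩ hblock
  have hKv : ∀ k, ‖K (v k)‖ = |lam| := by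
    intro k
    have h0 : Q (v k) = 0 := hQ0 (m k) k
    have := hdecomp (v k)
    rw [h0] at this
    have hKvk : K (v k) = -(lam • v k) := eq_neg_of_add_eq_zero_right this.symm
    rw [hKvk, norm_neg, norm_smul, hnorm1 (m k) k, Real.norm_eq_abs, mul_one]
  have hbound : ∀ k, |lam| ≤ ‖K (z k)‖ + ‖K‖ * (2/((k:ℝ)+1)) := by
    intro k
    calc |lam| = ‖K (v k)‖ := (hKv k).symm
      _ = ‖K (v k - z k) + K (z k)‖ := by rw [map_sub]; congr 1; abel
      _ ≤ ‖K (v k - z k)‖ + ‖K (z k)‖ := norm_add_le _ _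
      _ ≤ ‖K‖ * ‖v k - z k‖ + ‖K (z k)‖ := by
          exact add_le_add_left (K.le_opNorm _) _
      _ ≤ ‖K‖ * (2/((k:ℝ)+1)) + ‖K (z k)‖ := by
          exact add_le_add_left (mul_le_mul_of_nonneg_left (hvz k) (norm_nonneg K)) _
      _ = ‖K (z k)‖ + ‖K‖ * (2/((k:ℝ)+1)) := by ring
  have hden : Tendsto (fun k : ℕ => 2/((k:ℝ)+1)) atTop (𝓝 0) := by
    apply Tendsto.div_atTop (tendsto_const_nhds : Tendsto (fun _ : ℕ => (2:ℝ)) atTop (𝓝 2))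
    exact tendsto_atTop_add_const_right atTop 1 tendsto_natCast_atTop_atTop
  have hto : Tendsto (fun k : ℕ => ‖K (z k)‖ + ‖K‖ * (2/((k:ℝ)+1))) atTop (𝓝 0) := by
    have := hKz.add ((hden.const_mul ‖K‖))
    simpa using this
  have : |lam| ≤ 0 := ge_of_tendsto' hto hbound
  exact hlam (abs_eq_zero.mp (le_antisymm this (abs_nonneg _)))
end

section
/- Let n > m be natural numbers and let T : Z^n → Z^m be a bounded operator of the form T = Λ·I + K, where Λ = (λ_{i,j}) is an m×n real matrix, Λ·I is the corresponding matrix of scalar multiples of the identity on the infinite-dimensional Banach space Z, and K is horizontally compact (for every ε > 0, ‖K‖ restricted to the tail subspace Z^n_{(k,∞)} is < ε for large k, with respect to a Schauder decomposition of Z). Then T cannot be an isomorphic embedding (bounded below). -/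
open Filter Topology

/-- Let `n > m` and let `T : Zⁿ → Zᵐ` (sup-norm sums) be of the form
`T = Λ·I + K` with `Λ` an `m × n` real matrix and `K` horizontally compact with respect
to a Schauder decomposition of the infinite-dimensional space `Z` (given by projections
`P k` with nontrivial tails). Then `T` is not an isomorphic embedding. -/
theorem stmt_14 (Z : Type*) [NormedAddCommGroup Z] [NormedSpace ℝ Z] [CompleteSpace Z]
    (P : ℕ → Z →L[ℝ] Z)
    (hbdd : ∃ C, ∀ k, ‖P k‖ ≤ C)
    (hcompat : ∀ k l, (P k) ∘L (P l) = P (min k l))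
    (hlim : ∀ z : Z, Tendsto (fun k => P k z) atTop (𝓝 z))
    (htail : ∀ k : ℕ, ∃ x : Z, x ≠ 0 ∧ P k x = 0)
    (n m : ℕ) (hnm : m < n) (Λ : Matrix (Fin m) (Fin n) ℝ)
    (T K : (Fin n → Z) →L[ℝ] (Fin m → Z))
    (hdecomp : ∀ (x : Fin n → Z) (i : Fin m), T x i = (∑ j, Λ i j • x j) + K x i)
    (hK : ∀ ε > (0 : ℝ), ∃ k₀ : ℕ, ∀ x : Fin n → Z,
      (∀ i, P k₀ (x i) = 0) → ‖K x‖ ≤ ε * ‖x‖) :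
    ¬ ∃ c > (0 : ℝ), ∀ x : Fin n → Z, c * ‖x‖ ≤ ‖T x‖ := by
  rintro ⟨c, hc, hT⟩
  -- Λ has nontrivial kernel
  have hninj : ¬ Function.Injective Λ.mulVecLin := by
    intro h
    have := LinearMap.finrank_le_finrank_of_injective h
    simp [Module.finrank_pi] at this
    omega
  obtain ⟨a, ha0, hane⟩ : ∃ a : Fin n → ℝ, Λ.mulVec a = 0 ∧ a ≠ 0 := by
    rw [← LinearMap.ker_eq_bot, LinearMap.ker_eq_bot'] at hninj
    push_neg at hninj
    obtain ⟨a, h1, h2⟩ := hninj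
    exact ⟨a, h1, h2⟩
  obtain ⟨k₀, hk₀⟩ := hK (c / 2) (by linarith)
  obtain ⟨x, hx0, hPx⟩ := htail k₀
  obtain ⟨j, haj⟩ : ∃ j, a j ≠ 0 := by
    by_contra h; push_neg at h; exact hane (funext h)
  set y : Fin n → Z := fun j => a j • x with hy
  have hynorm : 0 < ‖y‖ := by
    have : y j ≠ 0 := smul_ne_zero haj hx0
    have h1 : ‖y j‖ ≤ ‖y‖ := norm_le_pi_norm y j
    have h2 : 0 < ‖y j‖ := norm_pos_iff.mpr this
    linarith
  have hTy : T y = K y := by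
    funext i
    rw [hdecomp]
    have : (∑ j', Λ i j' • y j') = 0 := by
      have : (∑ j', Λ i j' • y j') = (Λ.mulVec a i) • x := by
        simp only [hy, Matrix.mulVec, dotProduct, Finset.sum_smul, smul_smul]
      rw [this, ha0]
      simp
    rw [this, zero_add]
  have hKy : ‖K y‖ ≤ (c / 2) * ‖y‖ := by
    apply hk₀
    intro i
    simp [hy, hPx]
  have := hT y
  rw [hTy] at this
  nlinarith
end
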